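/- If d > 0, all parameters nonnegative, and Λ_f, Λ_s, Λ_p ≥ 0, then the unique equilibrium U* = -A⁻¹Λ of the full university model has all coordinates nonnegative. -/
import Mathlib
set_option maxHeartbeats 1000000


open Matrix

theorem stmt16 (d αfs αfp αsf αsp αpf αps lf ls lp : ℝ)
    (hd : 0 < d) (h1 : 0 ≤ αfs) (h2 : 0 ≤ αfp) (h3 : 0 ≤ αsf)
    (h4 : 0 ≤ αsp) (h5 : 0 ≤ αpf) (h6 : 0 ≤ αps)
    (h7 : 0 ≤ lf) (h8 : 0 ≤ ls) (h9 : 0 ≤ lp)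
    (A : Matrix (Fin 3) (Fin 3) ℝ)
    (hA : A = !![-(d + αfs + αfp + lf), αsf, αpf;
                 αfs, -(d + αsf + αsp + ls), αps;
                 αfp, αsp, -(d + αps + αpf + lp)])
    (Λ : Fin 3 → ℝ) (hΛ : ∀ i, 0 ≤ Λ i) :
    ∀ U : Fin 3 → ℝ, A.mulVec U + Λ = 0 → ∀ i, 0 ≤ U i := by
  intro U h i
  have e0 := congrFun h 0
  have e1 := congrFun h 1
  have e2 := congrFun h 2
  simp [hA, mulVec, dotProduct, Fin.sum_univ_three] at e0 e1 e2
  have hΛ0 := hΛ 0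
  have hΛ1 := hΛ 1
  have hΛ2 := hΛ 2
  set x := U 0 with hx
  set y := U 1 with hy
  set z := U 2 with hz
  have key : 0 ≤ x ∧ 0 ≤ y ∧ 0 ≤ z := by
    rcases lt_or_ge x 0 with hxn | hxp <;>
    rcases lt_or_ge y 0 with hyn | hyp <;>
    rcases lt_or_ge z 0 with hzn | hzp
    · exfalso
      nlinarith [mul_neg_of_pos_of_neg hd hxn, mul_neg_of_pos_of_neg hd hyn,
        mul_neg_of_pos_of_neg hd hzn, mul_nonpos_of_nonneg_of_nonpos h7 hxn.le,
        mul_nonpos_of_nonneg_of_nonpos h8 hyn.le, mul_nonpos_of_nonneg_of_nonpos h9 hzn.le]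
    · exfalso
      nlinarith [mul_neg_of_pos_of_neg hd hxn, mul_neg_of_pos_of_neg hd hyn,
        mul_nonneg h5 hzp, mul_nonneg h6 hzp,
        mul_nonpos_of_nonneg_of_nonpos h7 hxn.le, mul_nonpos_of_nonneg_of_nonpos h8 hyn.le,
        mul_nonpos_of_nonneg_of_nonpos h2 hxn.le, mul_nonpos_of_nonneg_of_nonpos h4 hyn.le]
    · exfalso
      nlinarith [mul_neg_of_pos_of_neg hd hxn, mul_neg_of_pos_of_neg hd hzn,
        mul_nonneg h3 hyp, mul_nonneg h4 hyp,
        mul_nonpos_of_nonneg_of_nonpos h7 hxn.le, mul_nonpos_of_nonneg_of_nonpos h9 hzn.le,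
        mul_nonpos_of_nonneg_of_nonpos h1 hxn.le, mul_nonpos_of_nonneg_of_nonpos h6 hzn.le]
    · exfalso
      nlinarith [mul_neg_of_pos_of_neg hd hxn, mul_nonneg h3 hyp, mul_nonneg h5 hzp,
        mul_nonpos_of_nonneg_of_nonpos h7 hxn.le,
        mul_nonpos_of_nonneg_of_nonpos h1 hxn.le, mul_nonpos_of_nonneg_of_nonpos h2 hxn.le]
    · exfalso
      nlinarith [mul_neg_of_pos_of_neg hd hyn, mul_neg_of_pos_of_neg hd hzn,
        mul_nonneg h1 hxp, mul_nonneg h2 hxp,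
        mul_nonpos_of_nonneg_of_nonpos h8 hyn.le, mul_nonpos_of_nonneg_of_nonpos h9 hzn.le,
        mul_nonpos_of_nonneg_of_nonpos h3 hyn.le, mul_nonpos_of_nonneg_of_nonpos h5 hzn.le]
    · exfalso
      nlinarith [mul_neg_of_pos_of_neg hd hyn, mul_nonneg h1 hxp, mul_nonneg h6 hzp,
        mul_nonpos_of_nonneg_of_nonpos h8 hyn.le,
        mul_nonpos_of_nonneg_of_nonpos h3 hyn.le, mul_nonpos_of_nonneg_of_nonpos h4 hyn.le]
    · exfalso
      nlinarith [mul_neg_of_pos_of_neg hd hzn, mul_nonneg h2 hxp, mul_nonneg h4 hyp,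
        mul_nonpos_of_nonneg_of_nonpos h9 hzn.le,
        mul_nonpos_of_nonneg_of_nonpos h5 hzn.le, mul_nonpos_of_nonneg_of_nonpos h6 hzn.le]
    · exact ⟨hxp, hyp, hzp⟩
  fin_cases i
  · exact key.1
  · exact key.2.1
  · exact key.2.2
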